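/- Under the hypotheses of the previous remainder bound, if ε_1,...,ε_m are perturbations with ∑_k ε_k^0 = 0 where ε_k = α_k ε_k^0, and w_k = α_k^{-1}/∑_j α_j^{-1}, then the aggregated estimate Δ̄ = ∑_k w_k Δ(θ + ε_k) satisfies ‖Δ̄ − Δ(θ)‖ ≤ (L/2) ∑_k w_k ‖ε_k‖². -/

import Mathlib

lemma mpu_taylor_rem {d p : ℕ} {L : ℝ} (hL : 0 ≤ L)
    (Δ : EuclideanSpace ℝ (Fin d) → EuclideanSpace ℝ (Fin p))
    (J : EuclideanSpace ℝ (Fin d) →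
      (EuclideanSpace ℝ (Fin d) →L[ℝ] EuclideanSpace ℝ (Fin p)))
    (s : Set (EuclideanSpace ℝ (Fin d)))
    (hderiv : ∀ x ∈ s, HasFDerivAt Δ (J x) x)
    (hLip : ∀ x ∈ s, ∀ y ∈ s, ‖J x - J y‖ ≤ L * ‖x - y‖)
    (θ v : EuclideanSpace ℝ (Fin d))
    (hseg : ∀ t ∈ Set.Icc (0 : ℝ) 1, θ + t • v ∈ s) :
    ‖Δ (θ + v) - Δ θ - J θ v‖ ≤ L / 2 * ‖v‖ ^ 2 := by
  set f : ℝ → EuclideanSpace ℝ (Fin p) :=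
    fun t => Δ (θ + t • v) - Δ θ - t • (J θ v) with hf
  set f' : ℝ → EuclideanSpace ℝ (Fin p) :=
    fun t => J (θ + t • v) v - J θ v with hf'
  have hderiv' : ∀ t ∈ Set.Icc (0:ℝ) 1, HasDerivAt f (f' t) t := by
    intro t ht
    have hg : HasDerivAt (fun t : ℝ => θ + t • v) v t := by
      simpa using ((hasDerivAt_id t).smul_const v).const_add θ
    have h1 : HasDerivAt (fun t : ℝ => Δ (θ + t • v)) (J (θ + t • v) v) t :=
      (hderiv _ (hseg t ht)).comp_hasDerivAt t hg
    have h2 : HasDerivAt (fun t : ℝ => t • (J θ v)) (J θ v) t := by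
      simpa using (hasDerivAt_id t).smul_const (J θ v)
    exact (h1.sub_const (Δ θ)).sub h2
  have key : ∀ t ∈ Set.Icc (0:ℝ) 1, ‖f t‖ ≤ L * ‖v‖ ^ 2 * t ^ 2 / 2 := by
    have hB : ∀ t : ℝ, HasDerivAt (fun t : ℝ => L * ‖v‖ ^ 2 * t ^ 2 / 2)
        (L * ‖v‖ ^ 2 * t) t := by
      intro t
      have := ((hasDerivAt_pow 2 t).const_mul (L * ‖v‖ ^ 2)).div_const 2
      refine this.congr_deriv ?_
      ring
    have hbound : ∀ t ∈ Set.Ico (0:ℝ) 1, ‖f' t‖ ≤ L * ‖v‖ ^ 2 * t := by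
      intro t ht
      have ht' : t ∈ Set.Icc (0:ℝ) 1 := Set.mem_Icc_of_Ico ht
      have h1 : ‖f' t‖ ≤ ‖J (θ + t • v) - J θ‖ * ‖v‖ := by
        simpa [hf'] using (J (θ + t • v) - J θ).le_opNorm v
      have h2 : ‖J (θ + t • v) - J θ‖ ≤ L * ‖t • v‖ := by
        have := hLip _ (hseg t ht') _ (by simpa using hseg 0 (by norm_num))
        simpa [add_sub_cancel_left] using this
      have h3 : ‖t • v‖ = t * ‖v‖ := by
        rw [norm_smul, Real.norm_of_nonneg ht.1]
      calc ‖f' t‖ ≤ (L * (t * ‖v‖)) * ‖v‖ := by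
            refine h1.trans ?_
            have := (h2.trans_eq (by rw [h3])).trans (le_refl _)
            nlinarith [norm_nonneg v, norm_nonneg (J (θ + t • v) - J θ)]
        _ = L * ‖v‖ ^ 2 * t := by ring
    exact image_norm_le_of_norm_deriv_right_le_deriv_boundary
      (fun t ht => (hderiv' t ht).continuousAt.continuousWithinAt)
      (fun t ht => (hderiv' t (Set.mem_Icc_of_Ico ht)).hasDerivWithinAt)
      (by simp [hf]) hB hbound
  have := key 1 (by norm_num)
  simpa [hf] using this.trans (by nlinarith [norm_nonneg v])

/-- Harmonic aggregation error bound: under an `L`-Lipschitz Jacobian, zero-sum base noises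
`ε⁰` scaled by `α k` and aggregated with harmonic weights `w k = α k⁻¹ / ∑ j, α j⁻¹` satisfy
`‖∑ k, w k • Δ(θ + ε k) − Δ(θ)‖ ≤ (L/2) ∑ k, w k ‖ε k‖²`. -/
theorem mpu_harmonic_aggregation_error_bound
    (m d p : ℕ) (hm : 2 ≤ m) (hd : 1 ≤ d) (hp : 1 ≤ p) (L : ℝ) (hL : 0 < L)
    (Δ : EuclideanSpace ℝ (Fin d) → EuclideanSpace ℝ (Fin p))
    (J : EuclideanSpace ℝ (Fin d) →
      (EuclideanSpace ℝ (Fin d) →L[ℝ] EuclideanSpace ℝ (Fin p)))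
    (s : Set (EuclideanSpace ℝ (Fin d)))
    (hderiv : ∀ x ∈ s, HasFDerivAt Δ (J x) x)
    (hLip : ∀ x ∈ s, ∀ y ∈ s, ‖J x - J y‖ ≤ L * ‖x - y‖)
    (θ : EuclideanSpace ℝ (Fin d))
    (α : Fin m → ℝ) (hα : ∀ k, 0 < α k)
    (w : Fin m → ℝ) (hw : ∀ k, w k = (α k)⁻¹ / ∑ j, (α j)⁻¹)
    (ε0 : Fin m → EuclideanSpace ℝ (Fin d)) (hε0 : ∑ k, ε0 k = 0)
    (ε : Fin m → EuclideanSpace ℝ (Fin d)) (hε : ∀ k, ε k = α k • ε0 k)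
    (hseg : ∀ k, ∀ t ∈ Set.Icc (0 : ℝ) 1, θ + t • ε k ∈ s) :
    ‖(∑ k, w k • Δ (θ + ε k)) - Δ θ‖ ≤ L / 2 * ∑ k, w k * ‖ε k‖ ^ 2 := by
  have hS : (0:ℝ) < ∑ j, (α j)⁻¹ := by
    have : (0:ℝ) < (α ⟨0, by omega⟩)⁻¹ := inv_pos.mpr (hα _)
    exact Finset.sum_pos (fun j _ => inv_pos.mpr (hα j)) ⟨⟨0, by omega⟩, Finset.mem_univ _⟩
  have hwpos : ∀ k, 0 ≤ w k := fun k => by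
    rw [hw k]
    exact div_nonneg (inv_nonneg.mpr (hα k).le) hS.le
  have hw1 : ∑ k, w k = 1 := by
    simp only [hw, div_eq_mul_inv, ← Finset.sum_mul]
    exact mul_inv_cancel₀ (ne_of_gt hS)
  have hwε : ∑ k, w k • ε k = 0 := by
    have : ∀ k, w k • ε k = (∑ j, (α j)⁻¹)⁻¹ • ε0 k := by
      intro k
      rw [hw k, hε k, smul_smul]
      congr 1
      rw [div_eq_mul_inv, mul_comm, mul_inv_cancel_left₀ (ne_of_gt (hα k))]
    rw [Finset.sum_congr rfl (fun k _ => this k), ← Finset.smul_sum, hε0, smul_zero]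
  have hrep : (∑ k, w k • Δ (θ + ε k)) - Δ θ
      = ∑ k, w k • (Δ (θ + ε k) - Δ θ - J θ (ε k)) := by
    have h1 : ∑ k, w k • (Δ (θ + ε k) - Δ θ - J θ (ε k))
        = (∑ k, w k • Δ (θ + ε k)) - (∑ k, w k) • Δ θ - J θ (∑ k, w k • ε k) := by
      rw [Finset.sum_smul, map_sum]
      rw [← Finset.sum_sub_distrib, ← Finset.sum_sub_distrib]
      congr 1
      ext k
      simp [smul_sub, map_smul]
    rw [h1, hw1, hwε, one_smul, map_zero, sub_zero]
  rw [hrep]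
  calc ‖∑ k, w k • (Δ (θ + ε k) - Δ θ - J θ (ε k))‖
      ≤ ∑ k, ‖w k • (Δ (θ + ε k) - Δ θ - J θ (ε k))‖ := norm_sum_le _ _
    _ ≤ ∑ k, w k * (L / 2 * ‖ε k‖ ^ 2) := by
        apply Finset.sum_le_sum
        intro k _
        rw [norm_smul, Real.norm_of_nonneg (hwpos k)]
        exact mul_le_mul_of_nonneg_left
          (mpu_taylor_rem hL.le Δ J s hderiv hLip θ (ε k) (hseg k)) (hwpos k)
    _ = L / 2 * ∑ k, w k * ‖ε k‖ ^ 2 := by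
        rw [Finset.mul_sum]; congr 1; ext k; ring
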